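/- arXiv:1805.08812 — 9 statements merged into one kernel-verified Lean document; each statement's English description precedes it below -/
import Mathlib

section
/- An infinite-dimensional evolution algebra does not have a unit element. -/
namespace Module.Basis

variable {R A ι : Type*} [Semiring R] [NonUnitalNonAssocSemiring A] [Module R A]
  [SMulCommClass R A A]

theorem mul_eq_zero_of_repr_eq_zero (b : Basis ι R A)
    (hnat : ∀ i j : ι, i ≠ j → b i * b j = 0) {x : A} {j : ι} (hj : b.repr x j = 0) :
    b j * x = 0 := by
  rw [← b.linearCombination_repr x, Finsupp.linearCombination_apply, Finsupp.mul_sum]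
  refine Finset.sum_eq_zero fun i hi => ?_
  have hij : j ≠ i := by rintro rfl; exact (Finsupp.mem_support_iff.mp hi) hj
  simp only [mul_smul_comm, hnat j i hij, smul_zero]

theorem finite_of_mul_right_unit [Nontrivial R] (b : Basis ι R A)
    (hnat : ∀ i j : ι, i ≠ j → b i * b j = 0) {e : A} (he : ∀ a : A, a * e = a) :
    Finite ι := by
  have hsupport : Set.univ ⊆ ((b.repr e).support : Set ι) := fun j _ => by
    by_contra hj
    have h0 := b.mul_eq_zero_of_repr_eq_zero hnat (Finsupp.notMem_support_iff.mp hj)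
    exact b.ne_zero j ((he (b j)).symm.trans h0)
  exact Set.finite_univ_iff.mp ((b.repr e).support.finite_toSet.subset hsupport)

end Module.Basis

theorem stmt0_general {K : Type*} [Field K] {A : Type*} [NonUnitalNonAssocRing A]
    [Module K A] [SMulCommClass K A A]
    {ι : Type*} (b : Module.Basis ι K A) (hnat : ∀ i j : ι, i ≠ j → b i * b j = 0)
    (hinf : ¬ FiniteDimensional K A) :
    ¬ ∃ e : A, ∀ a : A, a * e = a ∧ e * a = a := by
  rintro ⟨e, he⟩
  have : Finite ι := b.finite_of_mul_right_unit hnat fun a => (he a).1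
  exact hinf (Module.Finite.of_basis b)

/-- An infinite-dimensional evolution algebra does not have a unit element. -/
theorem stmt0 {K : Type*} [Field K] {A : Type*} [NonUnitalNonAssocRing A]
    [Module K A] [SMulCommClass K A A] [IsScalarTower K A A]
    {ι : Type*} (b : Module.Basis ι K A) (hnat : ∀ i j : ι, i ≠ j → b i * b j = 0)
    (hinf : ¬ FiniteDimensional K A) :
    ¬ ∃ e : A, ∀ a : A, a * e = a ∧ e * a = a :=
  stmt0_general b hnat hinf
end

section
/- A finite-dimensional evolution algebra A has a unit if and only if for every natural basis {e_1, ..., e_n}, e_i² = ω_ii e_i with ω_ii ≠ 0 for every i; in that case the unit is e = (1/ω_11)e_1 + ... + (1/ω_nn)e_n. -/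
/-!
With respect to a natural basis `(c i)`, multiplication by a basis vector only sees one
coordinate: `c i * x = x * c i = (c.repr x i) • (c i * c i)`. Hence a right unit `e` gives
`c i = (c.repr e i) • (c i * c i)`, which forces `c.repr e i ≠ 0` and
`c i * c i = (c.repr e i)⁻¹ • c i`. Conversely, if `c i * c i = ω i • c i` with `ω i ≠ 0`, then
`∑ i, (ω i)⁻¹ • c i` fixes every basis vector from both sides, hence is a unit by linearity.
-/

namespace Module.Basis

section Semiring

variable {ι R A : Type*} [Semiring R] [NonUnitalNonAssocSemiring A] [Module R A]

theorem mul_eq_self_of_mul_basis [IsScalarTower R A A] (c : Basis ι R A) {e : A}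
    (h : ∀ i, c i * e = c i) (a : A) : a * e = a :=
  LinearMap.congr_fun (c.ext (f₁ := LinearMap.mulRight R e) (f₂ := LinearMap.id) h) a

theorem mul_eq_self_of_basis_mul [SMulCommClass R A A] (c : Basis ι R A) {e : A}
    (h : ∀ i, e * c i = c i) (a : A) : e * a = a :=
  LinearMap.congr_fun (c.ext (f₁ := LinearMap.mulLeft R e) (f₂ := LinearMap.id) h) a

variable {c : Basis ι R A} (hc : ∀ i j, i ≠ j → c i * c j = 0)
include hc

theorem basis_mul_eq_repr_smul [SMulCommClass R A A] (i : ι) (x : A) :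
    c i * x = c.repr x i • (c i * c i) := by
  classical
  refine LinearMap.congr_fun (c.ext (f₁ := LinearMap.mulLeft R (c i))
    (f₂ := (c.coord i).smulRight (c i * c i)) fun j => ?_) x
  by_cases hij : i = j
  · subst hij; simp
  · simp [hc i j hij, Ne.symm hij]

theorem mul_basis_eq_repr_smul [IsScalarTower R A A] (i : ι) (x : A) :
    x * c i = c.repr x i • (c i * c i) := by
  classical
  refine LinearMap.congr_fun (c.ext (f₁ := LinearMap.mulRight R (c i))
    (f₂ := (c.coord i).smulRight (c i * c i)) fun j => ?_) x
  by_cases hji : j = i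
  · subst hji; simp
  · simp [hc j i hji, hji]

end Semiring

variable {ι K A : Type*} [Field K] [NonUnitalNonAssocSemiring A] [Module K A] {c : Basis ι K A}

theorem repr_sum_inv_smul_smul_sq [Fintype ι] {ω : ι → K}
    (hω : ∀ i, ω i ≠ 0 ∧ c i * c i = ω i • c i) (i : ι) :
    c.repr (∑ j, (ω j)⁻¹ • c j) i • (c i * c i) = c i := by
  rw [c.repr_sum_self, (hω i).2, smul_smul, inv_mul_cancel₀ (hω i).1, one_smul]

variable (hc : ∀ i j, i ≠ j → c i * c j = 0)
include hc

theorem repr_ne_zero_of_mul_eq_self [SMulCommClass K A A] {e : A} (he : ∀ a, a * e = a)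
    (i : ι) : c.repr e i ≠ 0 := by
  intro h0
  apply c.ne_zero i
  rw [← he (c i), basis_mul_eq_repr_smul hc, h0, zero_smul]

theorem sq_eq_inv_repr_smul_of_mul_eq_self [SMulCommClass K A A] {e : A}
    (he : ∀ a, a * e = a) (i : ι) : c i * c i = (c.repr e i)⁻¹ • c i := by
  conv_rhs => rw [← he (c i), basis_mul_eq_repr_smul hc]
  rw [smul_smul, inv_mul_cancel₀ (repr_ne_zero_of_mul_eq_self hc he i), one_smul]

variable [Fintype ι] {ω : ι → K} (hω : ∀ i, ω i ≠ 0 ∧ c i * c i = ω i • c i)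
include hω

theorem mul_sum_inv_smul [SMulCommClass K A A] [IsScalarTower K A A] (a : A) :
    a * ∑ i, (ω i)⁻¹ • c i = a :=
  c.mul_eq_self_of_mul_basis
    (fun i => (basis_mul_eq_repr_smul hc i _).trans (repr_sum_inv_smul_smul_sq hω i)) a

theorem sum_inv_smul_mul [SMulCommClass K A A] [IsScalarTower K A A] (a : A) :
    (∑ i, (ω i)⁻¹ • c i) * a = a :=
  c.mul_eq_self_of_basis_mul
    (fun i => (mul_basis_eq_repr_smul hc i _).trans (repr_sum_inv_smul_smul_sq hω i)) a

end Module.Basis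

theorem stmt1_general {K : Type*} [Field K] {A : Type*} [NonUnitalNonAssocRing A]
    [Module K A] [SMulCommClass K A A] [IsScalarTower K A A]
    {n : ℕ} (b : Module.Basis (Fin n) K A) (hnat : ∀ i j : Fin n, i ≠ j → b i * b j = 0) :
    ((∃ e : A, ∀ a : A, a * e = a ∧ e * a = a) ↔
      ∀ (m : ℕ) (c : Module.Basis (Fin m) K A), (∀ i j : Fin m, i ≠ j → c i * c j = 0) →
        ∀ i : Fin m, ∃ ω : K, ω ≠ 0 ∧ c i * c i = ω • c i) ∧
    (∀ (m : ℕ) (c : Module.Basis (Fin m) K A), (∀ i j : Fin m, i ≠ j → c i * c j = 0) →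
      ∀ ω : Fin m → K, (∀ i : Fin m, ω i ≠ 0 ∧ c i * c i = ω i • c i) →
        ∀ a : A, a * (∑ i : Fin m, (ω i)⁻¹ • c i) = a ∧ (∑ i : Fin m, (ω i)⁻¹ • c i) * a = a) := by
  open Module.Basis in
  refine ⟨⟨fun ⟨e, he⟩ m c hc i => ?_, fun h => ?_⟩,
    fun m c hc ω hω a => ⟨mul_sum_inv_smul hc hω a, sum_inv_smul_mul hc hω a⟩⟩
  · have he' (a : A) : a * e = a := (he a).1
    exact ⟨_, inv_ne_zero (repr_ne_zero_of_mul_eq_self hc he' i),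
      sq_eq_inv_repr_smul_of_mul_eq_self hc he' i⟩
  · choose ω hω using h n b hnat
    exact ⟨_, fun a => ⟨mul_sum_inv_smul hnat hω a, sum_inv_smul_mul hnat hω a⟩⟩

/-- A finite-dimensional evolution algebra `A` has a unit iff for every natural basis
`{e_1, ..., e_n}` one has `e_i² = ω_ii • e_i` with `ω_ii ≠ 0` for every `i`; in that case
the unit is `e = Σ_i (ω_ii)⁻¹ • e_i`. -/
theorem stmt1 {K : Type*} [Field K] {A : Type*} [NonUnitalNonAssocRing A]
    [Module K A] [SMulCommClass K A A] [IsScalarTower K A A]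
    [FiniteDimensional K A]
    {n : ℕ} (b : Module.Basis (Fin n) K A) (hnat : ∀ i j : Fin n, i ≠ j → b i * b j = 0) :
    ((∃ e : A, ∀ a : A, a * e = a ∧ e * a = a) ↔
      ∀ (m : ℕ) (c : Module.Basis (Fin m) K A), (∀ i j : Fin m, i ≠ j → c i * c j = 0) →
        ∀ i : Fin m, ∃ ω : K, ω ≠ 0 ∧ c i * c i = ω • c i) ∧
    (∀ (m : ℕ) (c : Module.Basis (Fin m) K A), (∀ i j : Fin m, i ≠ j → c i * c j = 0) →
      ∀ ω : Fin m → K, (∀ i : Fin m, ω i ≠ 0 ∧ c i * c i = ω i • c i) →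
        ∀ a : A, a * (∑ i : Fin m, (ω i)⁻¹ • c i) = a ∧ (∑ i : Fin m, (ω i)⁻¹ • c i) * a = a) :=
  stmt1_general b hnat
end

section
/- An evolution algebra A has a unit if and only if A is a finite-dimensional non-zero trivial evolution algebra (i.e., relative to some natural basis {e_1,...,e_n}, e_i² = ω_ii e_i with ω_ii ≠ 0 for every i). -/
/-!
In a natural basis `b`, multiplication by `b i` only sees the `i`-th coordinate:
`b i * x = x * b i = (b.repr x i) • (b i * b i)`. So if `e` is a unit, then
`b i = (b.repr e i) • (b i * b i)` for every `i`; this forces `b.repr e i ≠ 0` for all `i`,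
hence the index set is finite, and `b i * b i = (b.repr e i)⁻¹ • b i`. Conversely, if
`b i * b i = ω i • b i` with `ω i ≠ 0` and the basis is finite, then `∑ i, (ω i)⁻¹ • b i`
is a unit, since it is one against each basis vector.
-/

namespace Module.Basis

variable {K A ι : Type*} [Field K] [NonUnitalNonAssocRing A] [Module K A] (b : Basis ι K A)

def IsNatural : Prop := ∀ i j, i ≠ j → b i * b j = 0

variable {b}

theorem mul_eq_self_of_forall_basis_mul [IsScalarTower K A A] {u : A}
    (hu : ∀ i, b i * u = b i) (a : A) : a * u = a := by
  have : LinearMap.mulRight K u = LinearMap.id := b.ext fun i => hu i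
  exact LinearMap.congr_fun this a

theorem mul_eq_self_of_forall_mul_basis [SMulCommClass K A A] {u : A}
    (hu : ∀ i, u * b i = b i) (a : A) : u * a = a := by
  have : LinearMap.mulLeft K u = LinearMap.id := b.ext fun i => hu i
  exact LinearMap.congr_fun this a

namespace IsNatural

variable (hb : b.IsNatural)
include hb

theorem basis_mul_eq_repr_smul [SMulCommClass K A A] (i : ι) (x : A) :
    b i * x = b.repr x i • (b i * b i) := by
  have : LinearMap.mulLeft K (b i) = (b.coord i).smulRight (b i * b i) := by
    refine b.ext fun j => ?_
    obtain rfl | hij := eq_or_ne i j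
    · simp
    · simp [hb i j hij, Finsupp.single_eq_of_ne hij]
  exact LinearMap.congr_fun this x

theorem mul_basis_eq_repr_smul [IsScalarTower K A A] (i : ι) (x : A) :
    x * b i = b.repr x i • (b i * b i) := by
  have : LinearMap.mulRight K (b i) = (b.coord i).smulRight (b i * b i) := by
    refine b.ext fun j => ?_
    obtain rfl | hij := eq_or_ne i j
    · simp
    · simp [hb j i hij.symm, Finsupp.single_eq_of_ne hij]
  exact LinearMap.congr_fun this x

section RightUnit

variable [SMulCommClass K A A] {e : A} (he : ∀ i, b i * e = b i)
include he

theorem repr_ne_zero_of_basis_mul_eq_self (i : ι) : b.repr e i ≠ 0 := by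
  intro h
  apply b.ne_zero i
  rw [← he i, hb.basis_mul_eq_repr_smul, h, zero_smul]

theorem finite_of_basis_mul_eq_self : Finite ι :=
  Set.finite_univ_iff.mp <| (b.repr e).support.finite_toSet.subset fun i _ =>
    Finsupp.mem_support_iff.mpr (hb.repr_ne_zero_of_basis_mul_eq_self he i)

theorem basis_mul_self_eq_inv_smul_of_basis_mul_eq_self (i : ι) :
    b i * b i = (b.repr e i)⁻¹ • b i := by
  conv_rhs => rw [← he i, hb.basis_mul_eq_repr_smul]
  rw [inv_smul_smul₀ (hb.repr_ne_zero_of_basis_mul_eq_self he i)]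

end RightUnit

section DiagonalSquares

variable [Fintype ι] {ω : ι → K} (hω : ∀ i, ω i ≠ 0) (hsq : ∀ i, b i * b i = ω i • b i)
include hω hsq

theorem basis_mul_sum_inv_smul [SMulCommClass K A A] (i : ι) :
    b i * ∑ j, (ω j)⁻¹ • b j = b i := by
  rw [hb.basis_mul_eq_repr_smul, repr_sum_self, hsq, inv_smul_smul₀ (hω i)]

theorem sum_inv_smul_mul_basis [IsScalarTower K A A] (i : ι) :
    (∑ j, (ω j)⁻¹ • b j) * b i = b i := by
  rw [hb.mul_basis_eq_repr_smul, repr_sum_self, hsq, inv_smul_smul₀ (hω i)]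

end DiagonalSquares

end IsNatural

end Module.Basis

/-- An evolution algebra has a unit iff it is a finite-dimensional non-zero trivial
evolution algebra (i.e. relative to a natural basis, `e_i² = ω_ii • e_i` with `ω_ii ≠ 0`). -/
theorem stmt4 {K : Type*} [Field K] {A : Type*} [NonUnitalNonAssocRing A]
    [Module K A] [SMulCommClass K A A] [IsScalarTower K A A]
    {ι : Type*} (b : Module.Basis ι K A) (hnat : ∀ i j : ι, i ≠ j → b i * b j = 0) :
    (∃ e : A, ∀ a : A, a * e = a ∧ e * a = a) ↔
      (FiniteDimensional K A ∧ ∀ i : ι, ∃ ω : K, ω ≠ 0 ∧ b i * b i = ω • b i) := by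
  have hb : b.IsNatural := hnat
  constructor
  · rintro ⟨e, he⟩
    have hright : ∀ i, b i * e = b i := fun i => (he (b i)).1
    have : Finite ι := hb.finite_of_basis_mul_eq_self hright
    refine ⟨Module.Finite.of_basis b, fun i => ⟨(b.repr e i)⁻¹, ?_, ?_⟩⟩
    · exact inv_ne_zero (hb.repr_ne_zero_of_basis_mul_eq_self hright i)
    · exact hb.basis_mul_self_eq_inv_smul_of_basis_mul_eq_self hright i
  · rintro ⟨hfd, hsq⟩
    choose ω hω hsq using hsq
    have : Fintype ι := FiniteDimensional.fintypeBasisIndex b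
    refine ⟨∑ i, (ω i)⁻¹ • b i, fun a => ⟨?_, ?_⟩⟩
    · exact Module.Basis.mul_eq_self_of_forall_basis_mul (hb.basis_mul_sum_inv_smul hω hsq) a
    · exact Module.Basis.mul_eq_self_of_forall_mul_basis (hb.sum_inv_smul_mul_basis hω hsq) a
end

section
/- Let A be an algebra and A₁ = A ⊕ K·1 its unitization. Then A₁ is an evolution algebra if and only if A is an evolution algebra with a unit, if and only if A is a finite-dimensional non-zero trivial evolution algebra. -/
/-!
If `b` is an evolution basis and `u` a right identity, then `b j = b j * u = u_j • (b j * b j)`,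
where `u_j` is the `j`-th coordinate of `u`. So every coordinate of `u` is non-zero, which
leaves only finitely many basis vectors, and `b j * b j = u_j⁻¹ • b j`: the algebra is a
finite-dimensional non-zero trivial evolution algebra. Conversely, if `b i * b i = ω_i • b i`
for finitely many `i`, then `∑ ω_i⁻¹ • b i` is a two-sided unit.

In the unitization, `a * b j` has first coordinate `0` for `a ∈ A`, while it equals
`a_j • (b j * b j)` whose first coordinate is `a_j (b j).fst ^ 2`. Hence `a` is a combination
of the `b j` lying in `A`, and these form an evolution basis of `A`. Conversely, if `A` has an
evolution basis and a unit `e`, then adjoining the idempotent `1 - e`, which annihilates `A`,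
gives an evolution basis of `A₁`.
-/

open Module

namespace Unitization

variable {R A : Type*} [CommSemiring R] [NonUnitalNonAssocSemiring A] [Module R A]

instance [IsScalarTower R A A] : IsScalarTower R (Unitization R A) (Unitization R A) where
  smul_assoc s x y := by
    change (s • x) * y = s • (x * y)
    ext
    · simp [mul_assoc]
    · simp only [snd_mul, snd_smul, fst_smul, smul_add, smul_mul_assoc, smul_eq_mul, mul_smul,
        smul_comm y.fst s]

instance [SMulCommClass R A A] : SMulCommClass R (Unitization R A) (Unitization R A) where
  smul_comm s x y := by
    change s • (x * y) = x * (s • y)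
    ext
    · simp [mul_left_comm]
    · simp only [snd_mul, snd_smul, fst_smul, smul_add, mul_smul_comm, smul_eq_mul, mul_smul,
        smul_comm x.fst s]

end Unitization

section EvolutionBasis

variable {K M ι : Type*} [Field K] [NonUnitalNonAssocRing M] [Module K M]

def IsEvolutionBasis (b : Basis ι K M) : Prop :=
  Pairwise fun i j ↦ b i * b j = 0

def IsTrivialEvolutionBasis (b : Basis ι K M) : Prop :=
  IsEvolutionBasis b ∧ ∀ i, ∃ ω : K, ω ≠ 0 ∧ b i * b i = ω • b i

namespace IsEvolutionBasis

variable {b : Basis ι K M}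

theorem mul_basis [IsScalarTower K M M] (hb : IsEvolutionBasis b) (x : M) (j : ι) :
    x * b j = b.repr x j • (b j * b j) := by
  suffices LinearMap.mulRight K (b j) = (b.coord j).smulRight (b j * b j) from
    LinearMap.congr_fun this x
  refine b.ext fun i ↦ ?_
  rcases eq_or_ne i j with rfl | hij
  · simp
  · simp [hb hij, Finsupp.single_eq_of_ne' hij]

theorem basis_mul [SMulCommClass K M M] (hb : IsEvolutionBasis b) (x : M) (j : ι) :
    b j * x = b.repr x j • (b j * b j) := by
  suffices LinearMap.mulLeft K (b j) = (b.coord j).smulRight (b j * b j) from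
    LinearMap.congr_fun this x
  refine b.ext fun i ↦ ?_
  rcases eq_or_ne i j with rfl | hij
  · simp
  · simp [hb hij.symm, Finsupp.single_eq_of_ne' hij]

section RightIdentity

variable [SMulCommClass K M M] (hb : IsEvolutionBasis b) {u : M} (hu : ∀ x, x * u = x)
include hb hu

theorem eq_repr_smul_mul_self_of_right_identity (j : ι) : b j = b.repr u j • (b j * b j) :=
  (hu (b j)).symm.trans (hb.basis_mul u j)

theorem repr_ne_zero_of_right_identity (j : ι) : b.repr u j ≠ 0 := fun h ↦
  b.ne_zero j (by rw [hb.eq_repr_smul_mul_self_of_right_identity hu j, h, zero_smul])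

theorem finite_of_right_identity : Finite ι :=
  Set.finite_univ_iff.1 <| (b.repr u).support.finite_toSet.subset fun j _ ↦
    Finsupp.mem_support_iff.2 (hb.repr_ne_zero_of_right_identity hu j)

theorem isTrivial_of_right_identity : IsTrivialEvolutionBasis b := by
  have hne := hb.repr_ne_zero_of_right_identity hu
  refine ⟨hb, fun j ↦ ⟨(b.repr u j)⁻¹, inv_ne_zero (hne j), ?_⟩⟩
  conv_rhs => rw [hb.eq_repr_smul_mul_self_of_right_identity hu j]
  rw [smul_smul, inv_mul_cancel₀ (hne j), one_smul]

end RightIdentity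

end IsEvolutionBasis

theorem IsTrivialEvolutionBasis.reindex {ι' : Type*} {b : Basis ι K M}
    (hb : IsTrivialEvolutionBasis b) (e : ι ≃ ι') : IsTrivialEvolutionBasis (b.reindex e) := by
  refine ⟨fun i j hij ↦ ?_, fun i ↦ ?_⟩
  · simpa using hb.1 (e.symm.injective.ne hij)
  · simpa using hb.2 (e.symm i)

theorem IsTrivialEvolutionBasis.exists_two_sided_identity [IsScalarTower K M M]
    [SMulCommClass K M M] [Fintype ι] {b : Basis ι K M} (hb : IsTrivialEvolutionBasis b) :
    ∃ e : M, ∀ x, x * e = x ∧ e * x = x := by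
  choose ω hω hsq using hb.2
  have hcancel (x : M) (i : ι) :
      (ω i)⁻¹ • b.repr x i • (b i * b i) = b.repr x i • b i := by
    rw [hsq, smul_smul, smul_smul, mul_comm, mul_inv_cancel_left₀ (hω i)]
  refine ⟨∑ i, (ω i)⁻¹ • b i, fun x ↦ ⟨?_, ?_⟩⟩
  · simpa only [Finset.mul_sum, mul_smul_comm, hb.1.mul_basis x, hcancel] using b.sum_repr x
  · simpa only [Finset.sum_mul, smul_mul_assoc, hb.1.basis_mul x, hcancel] using b.sum_repr x

end EvolutionBasis

section Unitization

variable {K A ι : Type*} [Field K] [NonUnitalNonAssocRing A] [Module K A]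

noncomputable def unitizationBasis (b : Basis ι K A) (e : A) :
    Basis (Unit ⊕ ι) K (Unitization K A) :=
  ((Basis.singleton Unit K).prod b).map <|
    (LinearEquiv.refl K K).skewProd (LinearEquiv.refl K A)
        (-LinearMap.toSpanSingleton K A e) ≪≫ₗ (Unitization.linearEquiv K K A).symm

theorem unitizationBasis_inl (b : Basis ι K A) (e : A) :
    unitizationBasis b e (.inl ()) = 1 - (e : Unitization K A) := by
  rw [sub_eq_add_neg, ← Unitization.inr_neg]
  ext <;> simp [unitizationBasis]

theorem unitizationBasis_inr (b : Basis ι K A) (e : A) (i : ι) :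
    unitizationBasis b e (.inr i) = (b i : Unitization K A) := by
  ext <;> simp [unitizationBasis]

theorem IsEvolutionBasis.unitizationBasis {b : Basis ι K A} (hb : IsEvolutionBasis b) {e : A}
    (he : ∀ a, a * e = a ∧ e * a = a) : IsEvolutionBasis (unitizationBasis b e) := by
  rintro (⟨⟩ | i) (⟨⟩ | j) hij
  · exact absurd rfl hij
  · rw [unitizationBasis_inl, unitizationBasis_inr, sub_mul, one_mul, ← Unitization.inr_mul,
      (he (b j)).2, sub_self]
  · rw [unitizationBasis_inl, unitizationBasis_inr, mul_sub, mul_one, ← Unitization.inr_mul,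
      (he (b i)).1, sub_self]
  · rw [unitizationBasis_inr, unitizationBasis_inr, ← Unitization.inr_mul,
      hb (Sum.inr_injective.ne_iff.1 hij), Unitization.inr_zero]

variable [IsScalarTower K A A]

namespace IsEvolutionBasis

variable {b : Basis ι K (Unitization K A)} (hb : IsEvolutionBasis b)
include hb

theorem repr_inr_eq_zero (a : A) {j : ι} (hj : (b j).fst ≠ 0) :
    b.repr (a : Unitization K A) j = 0 := by
  have h := congrArg (fun x : Unitization K A ↦ x.fst) (hb.mul_basis (a : Unitization K A) j)
  simp only [Unitization.fst_mul, Unitization.fst_inr, zero_mul, Unitization.fst_smul,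
    smul_eq_mul] at h
  exact (mul_eq_zero.mp h.symm).resolve_right (mul_ne_zero hj hj)

theorem inr_mem_span (a : A) :
    (a : Unitization K A) ∈ Submodule.span K (b '' {j | (b j).fst = 0}) :=
  b.mem_span_image.2 fun _ hj ↦
    by_contra fun h ↦ Finsupp.mem_support_iff.1 hj (hb.repr_inr_eq_zero a h)

noncomputable def restrictUnitization : Basis {j // (b j).fst = 0} K A :=
  Basis.mk (v := fun j ↦ (b j).snd)
    (by
      refine LinearIndependent.of_comp (Unitization.inrHom K K A) ?_
      convert b.linearIndependent.comp _ Subtype.val_injective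
      ext j
      · exact j.2.symm
      · simp)
    (by
      intro a _
      have h := Submodule.mem_map_of_mem (f := Unitization.sndHom K K A) (hb.inr_mem_span a)
      rw [Submodule.map_span, Set.image_image] at h
      simp only [Set.image_eq_range, Unitization.sndHom_apply, Unitization.snd_inr] at h
      exact h)

theorem inr_restrictUnitization (j : {j // (b j).fst = 0}) :
    ((hb.restrictUnitization) j : Unitization K A) = b j := by
  ext
  · simp [restrictUnitization, j.2]
  · simp [restrictUnitization]

theorem restrictUnitization_isEvolutionBasis : IsEvolutionBasis hb.restrictUnitization :=
  fun i j hij ↦ Unitization.inr_injective (R := K) <| by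
    rw [Unitization.inr_mul, inr_restrictUnitization, inr_restrictUnitization,
      hb (Subtype.coe_ne_coe.2 hij), Unitization.inr_zero]

end IsEvolutionBasis

theorem IsTrivialEvolutionBasis.restrictUnitization {b : Basis ι K (Unitization K A)}
    (hb : IsTrivialEvolutionBasis b) : IsTrivialEvolutionBasis hb.1.restrictUnitization := by
  refine ⟨hb.1.restrictUnitization_isEvolutionBasis, fun j ↦ ?_⟩
  obtain ⟨ω, hω, hsq⟩ := hb.2 j
  refine ⟨ω, hω, Unitization.inr_injective (R := K) ?_⟩
  rw [Unitization.inr_mul, Unitization.inr_smul, IsEvolutionBasis.inr_restrictUnitization, hsq]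

theorem IsEvolutionBasis.exists_trivial_of_unitization [SMulCommClass K A A]
    {b : Basis ι K (Unitization K A)} (hb : IsEvolutionBasis b) :
    FiniteDimensional K A ∧ ∃ (n : ℕ) (c : Basis (Fin n) K A), IsTrivialEvolutionBasis c := by
  have htriv := hb.isTrivial_of_right_identity mul_one
  have := hb.finite_of_right_identity mul_one
  have := Fintype.ofFinite {j // (b j).fst = 0}
  exact ⟨.of_basis hb.restrictUnitization, _, _,
    htriv.restrictUnitization.reindex (Fintype.equivFin _)⟩

end Unitization

/-- For an algebra `A` with unitization `A₁ = Unitization K A`: `A₁` is an evolution algebra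
iff `A` is an evolution algebra with a unit, iff `A` is a finite-dimensional non-zero
trivial evolution algebra. -/
theorem stmt5 {K : Type} [Field K] {A : Type} [NonUnitalNonAssocRing A]
    [Module K A] [SMulCommClass K A A] [IsScalarTower K A A] :
    ((∃ (ι : Type) (b : Module.Basis ι K (Unitization K A)),
        ∀ i j : ι, i ≠ j → b i * b j = 0) ↔
      ((∃ (ι : Type) (b : Module.Basis ι K A), ∀ i j : ι, i ≠ j → b i * b j = 0) ∧
        ∃ e : A, ∀ a : A, a * e = a ∧ e * a = a)) ∧
    ((∃ (ι : Type) (b : Module.Basis ι K (Unitization K A)),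
        ∀ i j : ι, i ≠ j → b i * b j = 0) ↔
      (FiniteDimensional K A ∧ ∃ (n : ℕ) (b : Module.Basis (Fin n) K A),
        (∀ i j : Fin n, i ≠ j → b i * b j = 0) ∧
        ∀ i : Fin n, ∃ ω : K, ω ≠ 0 ∧ b i * b i = ω • b i)) := by
  refine ⟨⟨fun ⟨_, b, hb⟩ ↦ ?_, fun ⟨⟨_, b, hb⟩, e, he⟩ ↦
    ⟨_, _, IsEvolutionBasis.unitizationBasis hb he⟩⟩,
    fun ⟨_, b, hb⟩ ↦ IsEvolutionBasis.exists_trivial_of_unitization hb,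
    fun ⟨_, n, b, ho, hs⟩ ↦ ?_⟩
  · obtain ⟨-, n, c, hc⟩ := IsEvolutionBasis.exists_trivial_of_unitization hb
    exact ⟨⟨_, c, hc.1⟩, hc.exists_two_sided_identity⟩
  · obtain ⟨e, he⟩ := IsTrivialEvolutionBasis.exists_two_sided_identity (b := b) ⟨ho, hs⟩
    exact ⟨_, _, IsEvolutionBasis.unitizationBasis ho he⟩
end

section
/- Let A be an evolution algebra with natural basis B = {e_i : i ∈ Λ} and let M be a modular ideal of A. Then e_i ∈ M if and only if e_i² ∈ M. -/
theorem Module.Basis.mul_eq_coord_smul_mul_self {R A ι : Type*} [CommSemiring R]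
    [NonUnitalNonAssocSemiring A] [Module R A] [SMulCommClass R A A] (b : Module.Basis ι R A)
    (hnat : ∀ i j : ι, i ≠ j → b i * b j = 0) (i : ι) (x : A) :
    b i * x = b.coord i x • (b i * b i) := by
  suffices LinearMap.mulLeft R (b i) = (b.coord i).smulRight (b i * b i) from
    LinearMap.congr_fun this x
  refine b.ext fun j => ?_
  rcases eq_or_ne i j with rfl | hij
  · simp
  · simp [hnat i j hij, Finsupp.single_eq_of_ne hij]

theorem stmt6_general {K : Type*} [Field K] {A : Type*} [NonUnitalNonAssocRing A]
    [Module K A] [SMulCommClass K A A]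
    {ι : Type*} (b : Module.Basis ι K A) (hnat : ∀ i j : ι, i ≠ j → b i * b j = 0)
    (M : Submodule K A)
    (hideal : ∀ x : A, ∀ a ∈ M, x * a ∈ M ∧ a * x ∈ M)
    (hmod : ∃ u : A, ∀ a : A, a - a * u ∈ M)
    (i : ι) :
    b i ∈ M ↔ b i * b i ∈ M := by
  refine ⟨fun h => (hideal (b i) (b i) h).1, fun h => ?_⟩
  obtain ⟨u, hu⟩ := hmod
  have hdecomp : b i = (b i - b i * u) + b.coord i u • (b i * b i) := by
    rw [← b.mul_eq_coord_smul_mul_self hnat, sub_add_cancel]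
  rw [hdecomp]
  exact M.add_mem (hu (b i)) (M.smul_mem _ h)

/-- In an evolution algebra with natural basis `b`, for any modular ideal `M`,
`b i ∈ M` iff `b i * b i ∈ M`. -/
theorem stmt6 {K : Type*} [Field K] {A : Type*} [NonUnitalNonAssocRing A]
    [Module K A] [SMulCommClass K A A] [IsScalarTower K A A]
    {ι : Type*} (b : Module.Basis ι K A) (hnat : ∀ i j : ι, i ≠ j → b i * b j = 0)
    (M : Submodule K A)
    (hideal : ∀ x : A, ∀ a ∈ M, x * a ∈ M ∧ a * x ∈ M)
    (hmod : ∃ u : A, ∀ a : A, a - a * u ∈ M)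
    (i : ι) :
    b i ∈ M ↔ b i * b i ∈ M :=
  stmt6_general b hnat M hideal hmod i
end

section
/- Let A be an evolution algebra with natural basis B = {e_i : i ∈ Λ} and let M be a modular ideal of A with support Λ_M = ∪_{a∈M} {i : the i-th coordinate of a is nonzero}. Then M = span{e_i : i ∈ Λ_M}. -/
/-!
In an evolution algebra `e_i x = x_i e_i²`. So if `a ∈ M` has `a_i ≠ 0`, then `e_i² ∈ M`
(as `a_i⁻¹ e_i a`), hence `e_i u = u_i e_i² ∈ M` for the modular unit `u`, and finally
`e_i = (e_i - e_i u) + e_i u ∈ M`. The other inclusion holds for any subspace.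
-/

namespace Module.Basis

theorem le_span_image_support {R M : Type*} [Semiring R] [AddCommMonoid M] [Module R M]
    {ι : Type*} (b : Basis ι R M) (N : Submodule R M) :
    N ≤ Submodule.span R (b '' {i | ∃ a ∈ N, b.repr a i ≠ 0}) := by
  intro a ha
  refine Submodule.span_mono ?_ (b.mem_span_repr_support a)
  rintro _ ⟨j, hj, rfl⟩
  exact ⟨j, ⟨a, ha, Finsupp.mem_support_iff.mp hj⟩, rfl⟩

theorem mul_eq_repr_smul_mul_self {R A : Type*} [Semiring R] [NonUnitalNonAssocSemiring A]
    [Module R A] [SMulCommClass R A A] {ι : Type*} (b : Basis ι R A)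
    (hnat : ∀ i j : ι, i ≠ j → b i * b j = 0) (i : ι) (x : A) :
    b i * x = b.repr x i • (b i * b i) := by
  conv_lhs => rw [← b.linearCombination_repr x]
  rw [Finsupp.linearCombination_apply, Finsupp.sum, Finset.mul_sum]
  simp_rw [mul_smul_comm]
  refine Finset.sum_eq_single i (fun j _ hj => ?_) (fun h => ?_)
  · rw [hnat i j (Ne.symm hj), smul_zero]
  · rw [Finsupp.notMem_support_iff.mp h, zero_smul]

variable {K A ι : Type*} [Field K] [NonUnitalNonAssocRing A] [Module K A] [SMulCommClass K A A]
  (b : Basis ι K A) (hnat : ∀ i j : ι, i ≠ j → b i * b j = 0) {M : Submodule K A}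
  (hleft : ∀ x : A, ∀ a ∈ M, x * a ∈ M)
include hnat hleft

theorem mul_self_mem_of_repr_ne_zero {i : ι} {a : A} (ha : a ∈ M) (hai : b.repr a i ≠ 0) :
    b i * b i ∈ M := by
  have h := M.smul_mem (b.repr a i)⁻¹ (hleft (b i) a ha)
  rwa [b.mul_eq_repr_smul_mul_self hnat, smul_smul, inv_mul_cancel₀ hai, one_smul] at h

theorem mem_of_repr_ne_zero {u : A} (hu : ∀ a : A, a - a * u ∈ M) {i : ι} {a : A}
    (ha : a ∈ M) (hai : b.repr a i ≠ 0) : b i ∈ M := by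
  have hiu : b i * u ∈ M := by
    rw [b.mul_eq_repr_smul_mul_self hnat]
    exact M.smul_mem _ (b.mul_self_mem_of_repr_ne_zero hnat hleft ha hai)
  simpa using M.add_mem (hu (b i)) hiu

end Module.Basis

theorem stmt7_general {K : Type*} [Field K] {A : Type*} [NonUnitalNonAssocRing A]
    [Module K A] [SMulCommClass K A A]
    {ι : Type*} (b : Module.Basis ι K A) (hnat : ∀ i j : ι, i ≠ j → b i * b j = 0)
    (M : Submodule K A)
    (hideal : ∀ x : A, ∀ a ∈ M, x * a ∈ M ∧ a * x ∈ M)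
    (hmod : ∃ u : A, ∀ a : A, a - a * u ∈ M) :
    M = Submodule.span K (b '' {i : ι | ∃ a ∈ M, b.repr a i ≠ 0}) := by
  obtain ⟨u, hu⟩ := hmod
  refine le_antisymm (b.le_span_image_support M) (Submodule.span_le.mpr ?_)
  rintro _ ⟨i, ⟨a, ha, hai⟩, rfl⟩
  exact b.mem_of_repr_ne_zero hnat (fun x a ha => (hideal x a ha).1) hu ha hai

/-- A modular ideal `M` of an evolution algebra with natural basis `b` equals the span of
the basis vectors indexed by its support `Λ_M = {i | ∃ a ∈ M, (b.repr a) i ≠ 0}`. -/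
theorem stmt7 {K : Type*} [Field K] {A : Type*} [NonUnitalNonAssocRing A]
    [Module K A] [SMulCommClass K A A] [IsScalarTower K A A]
    {ι : Type*} (b : Module.Basis ι K A) (hnat : ∀ i j : ι, i ≠ j → b i * b j = 0)
    (M : Submodule K A)
    (hideal : ∀ x : A, ∀ a ∈ M, x * a ∈ M ∧ a * x ∈ M)
    (hmod : ∃ u : A, ∀ a : A, a - a * u ∈ M) :
    M = Submodule.span K (b '' {i : ι | ∃ a ∈ M, b.repr a i ≠ 0}) :=
  stmt7_general b hnat M hideal hmod
end

section
/- Let A be an evolution algebra with natural basis {e_i : i ∈ Λ} and M a modular ideal with modular unit u. Then Λ \ Λ_M is finite; more precisely Λ \ Λ_M ⊆ Λ_u, i.e., Λ_M ∪ Λ_u = Λ. -/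
/-!
In an evolution algebra `e_i * e_j = 0` for `i ≠ j`, so `e_i * u = u_i • e_i²` where `u_i` is the
`i`-th coordinate of `u`. If `u_i = 0` then `e_i * u = 0`, and modularity gives
`e_i = e_i - e_i * u ∈ M`, so `i ∈ Λ_M`. Hence `Λ \ Λ_M ⊆ Λ_u`, which is finite.
-/

section EvolutionAlgebra

variable {K A ι : Type*} [CommSemiring K]

theorem Module.Basis.mul_eq_repr_smul_mul_self_s8 [NonUnitalNonAssocSemiring A] [Module K A]
    [SMulCommClass K A A] (b : Module.Basis ι K A) (hnat : ∀ i j : ι, i ≠ j → b i * b j = 0)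
    (i : ι) (x : A) : b i * x = b.repr x i • (b i * b i) := by
  suffices LinearMap.mulLeft K (b i) = (b.coord i).smulRight (b i * b i) from
    LinearMap.congr_fun this x
  refine b.ext fun j => ?_
  rcases eq_or_ne i j with rfl | hij
  · simp
  · simp [hnat i j hij, Finsupp.single_eq_of_ne hij]

theorem Module.Basis.mem_of_repr_eq_zero_of_sub_mul_mem [NonUnitalNonAssocRing A] [Module K A]
    [SMulCommClass K A A] (b : Module.Basis ι K A) (hnat : ∀ i j : ι, i ≠ j → b i * b j = 0)
    (M : Submodule K A) (u : A) (hu : ∀ a : A, a - a * u ∈ M) {i : ι} (hi : b.repr u i = 0) :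
    b i ∈ M := by
  simpa [b.mul_eq_repr_smul_mul_self_s8 hnat i u, hi] using hu (b i)

end EvolutionAlgebra

theorem stmt8_general {K : Type*} [Field K] {A : Type*} [NonUnitalNonAssocRing A]
    [Module K A] [SMulCommClass K A A]
    {ι : Type*} (b : Module.Basis ι K A) (hnat : ∀ i j : ι, i ≠ j → b i * b j = 0)
    (M : Submodule K A)
    (u : A) (hu : ∀ a : A, a - a * u ∈ M) :
    {i : ι | ¬ ∃ a ∈ M, b.repr a i ≠ 0} ⊆ {i : ι | b.repr u i ≠ 0} ∧
    {i : ι | ¬ ∃ a ∈ M, b.repr a i ≠ 0}.Finite ∧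
    {i : ι | ∃ a ∈ M, b.repr a i ≠ 0} ∪ {i : ι | b.repr u i ≠ 0} = Set.univ := by
  have hsub : {i : ι | ¬ ∃ a ∈ M, b.repr a i ≠ 0} ⊆ {i : ι | b.repr u i ≠ 0} :=
    fun i hi hui => hi ⟨b i, b.mem_of_repr_eq_zero_of_sub_mul_mem hnat M u hu hui, by simp⟩
  exact ⟨hsub, (b.repr u).hasFiniteSupport.subset hsub, Set.compl_subset_iff_union.mp hsub⟩

/-- If `M` is a modular ideal of an evolution algebra with modular unit `u`, then
`Λ \ Λ_M` is finite; more precisely `Λ \ Λ_M ⊆ Λ_u`, i.e. `Λ_M ∪ Λ_u = Λ`. -/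
theorem stmt8 {K : Type*} [Field K] {A : Type*} [NonUnitalNonAssocRing A]
    [Module K A] [SMulCommClass K A A] [IsScalarTower K A A]
    {ι : Type*} (b : Module.Basis ι K A) (hnat : ∀ i j : ι, i ≠ j → b i * b j = 0)
    (M : Submodule K A)
    (hideal : ∀ x : A, ∀ a ∈ M, x * a ∈ M ∧ a * x ∈ M)
    (u : A) (hu : ∀ a : A, a - a * u ∈ M) :
    {i : ι | ¬ ∃ a ∈ M, b.repr a i ≠ 0} ⊆ {i : ι | b.repr u i ≠ 0} ∧
    {i : ι | ¬ ∃ a ∈ M, b.repr a i ≠ 0}.Finite ∧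
    {i : ι | ∃ a ∈ M, b.repr a i ≠ 0} ∪ {i : ι | b.repr u i ≠ 0} = Set.univ :=
  stmt8_general b hnat M u hu
end

section
/- Let A be an evolution algebra with natural basis {e_i : i ∈ Λ}, structure matrix (ω_ji) (so e_i² = Σ_j ω_ji e_j), and let M be a proper modular ideal with support Λ_M. Then ω_ii ≠ 0 for every i ∈ Λ \ Λ_M, and u_0 = Σ_{i ∈ Λ\Λ_M} (1/ω_ii) e_i is a modular unit for M. Moreover u ∈ A is a modular unit for M if and only if u = m + u_0 for some m ∈ M. -/
/-!
Because the basis is natural, multiplying by a basis vector sees a single coordinate: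
`x eᵢ = xᵢ eᵢ²`. For `i ∉ Λ_M` the `i`-th coordinate of `eᵢ - eᵢ u ∈ M` is `1 - uᵢ ωᵢᵢ = 0`, so
`ωᵢᵢ ≠ 0`, `uᵢ = ωᵢᵢ⁻¹`, and `Λ \ Λ_M` lies in the finite support of `u`. For `i ∈ Λ_M` some
`m ∈ M` has `mᵢ ≠ 0`, and `eᵢ m = mᵢ eᵢ²` puts `eᵢ²` in `M`; hence `a v ∈ M` whenever `v` is
supported in `Λ_M`. Taking `v = u - u₀` makes `u₀` a modular unit, and by commutativity two
modular units `u, u'` differ by `(u - u u') - (u' - u' u) ∈ M`.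
-/

namespace EvolutionAlgebra

variable {K A ι : Type*}

section Semiring

variable [CommSemiring K] [NonUnitalNonAssocSemiring A] [Module K A] (b : Module.Basis ι K A)

theorem mul_basis [IsScalarTower K A A] (hnat : ∀ i j : ι, i ≠ j → b i * b j = 0)
    (x : A) (i : ι) : x * b i = b.repr x i • (b i * b i) := by
  classical
  have h : LinearMap.mulRight K (b i) = (b.coord i).smulRight (b i * b i) := by
    refine b.ext fun j => ?_
    by_cases hji : j = i
    · subst hji
      simp
    · simp [hnat j i hji, hji]
  simpa using DFunLike.congr_fun h x

theorem basis_mul [SMulCommClass K A A] (hnat : ∀ i j : ι, i ≠ j → b i * b j = 0)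
    (x : A) (i : ι) : b i * x = b.repr x i • (b i * b i) := by
  classical
  have h : LinearMap.mulLeft K (b i) = (b.coord i).smulRight (b i * b i) := by
    refine b.ext fun j => ?_
    by_cases hji : j = i
    · subst hji
      simp
    · simp [hnat i j (Ne.symm hji), hji]
  simpa using DFunLike.congr_fun h x

theorem mul_comm_of_natural [SMulCommClass K A A] [IsScalarTower K A A]
    (hnat : ∀ i j : ι, i ≠ j → b i * b j = 0) (x y : A) : x * y = y * x := by
  have h : LinearMap.mulLeft K x = LinearMap.mulRight K x :=
    b.ext fun j => by
      rw [LinearMap.mulLeft_apply, LinearMap.mulRight_apply, mul_basis b hnat x j,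
        basis_mul b hnat x j]
  exact DFunLike.congr_fun h y

end Semiring

section Field

variable [Field K] [NonUnitalNonAssocRing A] [Module K A] (b : Module.Basis ι K A)

def idealSupport (M : Submodule K A) : Set ι :=
  {i | ∃ a ∈ M, b.repr a i ≠ 0}

def IsModularUnit (M : Submodule K A) (u : A) : Prop :=
  ∀ a : A, a - a * u ∈ M

noncomputable def diagInvSum (s : Finset ι) : A :=
  ∑ i ∈ s, (b.repr (b i * b i) i)⁻¹ • b i

variable {b} {M : Submodule K A}

theorem repr_eq_zero_of_notMem_idealSupport {i : ι} (hi : i ∉ idealSupport b M) {a : A}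
    (ha : a ∈ M) : b.repr a i = 0 := by
  by_contra h
  exact hi ⟨a, ha, h⟩

theorem repr_diagInvSum_of_mem {s : Finset ι} {i : ι} (hi : i ∈ s) :
    b.repr (diagInvSum b s) i = (b.repr (b i * b i) i)⁻¹ := by
  classical
  simp [diagInvSum, Finsupp.single_apply, hi]

theorem IsModularUnit.of_mul_sub_mem {u u' : A} (hu : IsModularUnit M u)
    (h : ∀ a : A, a * (u' - u) ∈ M) : IsModularUnit M u' := fun a => by
  have heq : a - a * u' = (a - a * u) - a * (u' - u) := by
    rw [mul_sub]
    abel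
  rw [heq]
  exact M.sub_mem (hu a) (h a)

theorem IsModularUnit.isModularUnit_iff_exists_add (hleft : ∀ x : A, ∀ a ∈ M, x * a ∈ M)
    (hcomm : ∀ x y : A, x * y = y * x) {u₀ : A} (hu₀ : IsModularUnit M u₀) (u : A) :
    IsModularUnit M u ↔ ∃ m ∈ M, u = m + u₀ := by
  constructor
  · intro hu
    refine ⟨u - u₀, ?_, by abel⟩
    have heq : u - u₀ = (u - u * u₀) - (u₀ - u₀ * u) := by
      rw [hcomm u₀ u]
      abel
    rw [heq]
    exact M.sub_mem (hu₀ u) (hu u₀)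
  · rintro ⟨m, hm, rfl⟩
    exact hu₀.of_mul_sub_mem fun a => by simpa using hleft a m hm

variable [SMulCommClass K A A]

theorem IsModularUnit.repr_mul_diag_eq_one (hnat : ∀ i j : ι, i ≠ j → b i * b j = 0) {u : A}
    (hu : IsModularUnit M u) {i : ι} (hi : i ∉ idealSupport b M) :
    b.repr u i * b.repr (b i * b i) i = 1 := by
  have h := repr_eq_zero_of_notMem_idealSupport hi (hu (b i))
  rw [basis_mul b hnat] at h
  simp only [map_sub, map_smul, Module.Basis.repr_self, Finsupp.sub_apply, Finsupp.smul_apply,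
    Finsupp.single_eq_same, smul_eq_mul] at h
  exact (sub_eq_zero.mp h).symm

theorem IsModularUnit.diag_ne_zero (hnat : ∀ i j : ι, i ≠ j → b i * b j = 0) {u : A}
    (hu : IsModularUnit M u) {i : ι} (hi : i ∉ idealSupport b M) :
    b.repr (b i * b i) i ≠ 0 :=
  right_ne_zero_of_mul_eq_one (hu.repr_mul_diag_eq_one hnat hi)

theorem IsModularUnit.repr_eq_inv_diag (hnat : ∀ i j : ι, i ≠ j → b i * b j = 0) {u : A}
    (hu : IsModularUnit M u) {i : ι} (hi : i ∉ idealSupport b M) :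
    b.repr u i = (b.repr (b i * b i) i)⁻¹ :=
  eq_inv_of_mul_eq_one_left (hu.repr_mul_diag_eq_one hnat hi)

theorem IsModularUnit.finite_compl_idealSupport (hnat : ∀ i j : ι, i ≠ j → b i * b j = 0)
    {u : A} (hu : IsModularUnit M u) : (idealSupport b M)ᶜ.Finite := by
  refine (b.repr u).support.finite_toSet.subset fun i hi => ?_
  rw [Finset.mem_coe, Finsupp.mem_support_iff, hu.repr_eq_inv_diag hnat hi]
  exact inv_ne_zero (hu.diag_ne_zero hnat hi)

theorem basis_mul_self_mem (hnat : ∀ i j : ι, i ≠ j → b i * b j = 0)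
    (hleft : ∀ x : A, ∀ a ∈ M, x * a ∈ M) {i : ι} (hi : i ∈ idealSupport b M) :
    b i * b i ∈ M := by
  obtain ⟨m, hm, hmi⟩ := hi
  have h := M.smul_mem (b.repr m i)⁻¹ (hleft (b i) m hm)
  rwa [basis_mul b hnat, inv_smul_smul₀ hmi] at h

variable [IsScalarTower K A A]

theorem mul_mem_of_repr_eq_zero (hnat : ∀ i j : ι, i ≠ j → b i * b j = 0)
    (hleft : ∀ x : A, ∀ a ∈ M, x * a ∈ M) {v : A}
    (hv : ∀ i ∉ idealSupport b M, b.repr v i = 0) (a : A) : a * v ∈ M := by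
  rw [← b.linearCombination_repr v, Finsupp.linearCombination_apply, Finsupp.mul_sum]
  refine Submodule.finsuppSum_mem _ _ _ _ fun i hi => ?_
  have hiM : i ∈ idealSupport b M := by
    by_contra h
    exact hi (hv i h)
  rw [mul_smul_comm, mul_basis b hnat]
  exact M.smul_mem _ (M.smul_mem _ (basis_mul_self_mem hnat hleft hiM))

theorem IsModularUnit.isModularUnit_diagInvSum (hnat : ∀ i j : ι, i ≠ j → b i * b j = 0)
    (hleft : ∀ x : A, ∀ a ∈ M, x * a ∈ M) {u : A} (hu : IsModularUnit M u)
    (hfin : (idealSupport b M)ᶜ.Finite) : IsModularUnit M (diagInvSum b hfin.toFinset) := by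
  refine hu.of_mul_sub_mem (mul_mem_of_repr_eq_zero hnat hleft fun i hi => ?_)
  rw [map_sub, Finsupp.sub_apply, repr_diagInvSum_of_mem (hfin.mem_toFinset.mpr hi),
    hu.repr_eq_inv_diag hnat hi, sub_self]

end Field

end EvolutionAlgebra

open EvolutionAlgebra in
theorem stmt9_general {K : Type*} [Field K] {A : Type*} [NonUnitalNonAssocRing A]
    [Module K A] [SMulCommClass K A A] [IsScalarTower K A A]
    {ι : Type*} (b : Module.Basis ι K A) (hnat : ∀ i j : ι, i ≠ j → b i * b j = 0)
    (M : Submodule K A)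
    (hideal : ∀ x : A, ∀ a ∈ M, x * a ∈ M ∧ a * x ∈ M)
    (hmod : ∃ u : A, ∀ a : A, a - a * u ∈ M) :
    (∀ i : ι, (¬ ∃ a ∈ M, b.repr a i ≠ 0) → b.repr (b i * b i) i ≠ 0) ∧
    {i : ι | ¬ ∃ a ∈ M, b.repr a i ≠ 0}.Finite ∧
    ∀ hfin : {i : ι | ¬ ∃ a ∈ M, b.repr a i ≠ 0}.Finite,
      (∀ a : A,
        a - a * (∑ i ∈ hfin.toFinset, (b.repr (b i * b i) i)⁻¹ • b i) ∈ M) ∧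
      ∀ u : A, (∀ a : A, a - a * u ∈ M) ↔
        ∃ m ∈ M, u = m + ∑ i ∈ hfin.toFinset, (b.repr (b i * b i) i)⁻¹ • b i := by
  obtain ⟨u, hu⟩ := hmod
  have hleft : ∀ x : A, ∀ a ∈ M, x * a ∈ M := fun x a ha => (hideal x a ha).1
  have hu₀ (hfin : (idealSupport b M)ᶜ.Finite) :=
    IsModularUnit.isModularUnit_diagInvSum hnat hleft hu hfin
  refine ⟨fun i hi => IsModularUnit.diag_ne_zero hnat hu hi,
    IsModularUnit.finite_compl_idealSupport hnat hu, fun hfin => ⟨hu₀ hfin, ?_⟩⟩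
  exact (hu₀ hfin).isModularUnit_iff_exists_add hleft (mul_comm_of_natural b hnat)

/-- For a proper modular ideal `M` of an evolution algebra with natural basis `b` and
structure constants `ω j i = b.repr (b i * b i) j`: `ω i i ≠ 0` for every `i ∉ Λ_M`,
`u₀ = Σ_{i ∉ Λ_M} (ω i i)⁻¹ • b i` is a modular unit for `M`, and `u` is a modular unit
for `M` iff `u = m + u₀` for some `m ∈ M`. -/
theorem stmt9 {K : Type*} [Field K] {A : Type*} [NonUnitalNonAssocRing A]
    [Module K A] [SMulCommClass K A A] [IsScalarTower K A A]
    {ι : Type*} (b : Module.Basis ι K A) (hnat : ∀ i j : ι, i ≠ j → b i * b j = 0)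
    (M : Submodule K A)
    (hideal : ∀ x : A, ∀ a ∈ M, x * a ∈ M ∧ a * x ∈ M)
    (hmod : ∃ u : A, ∀ a : A, a - a * u ∈ M)
    (hproper : M ≠ ⊤) :
    (∀ i : ι, (¬ ∃ a ∈ M, b.repr a i ≠ 0) → b.repr (b i * b i) i ≠ 0) ∧
    {i : ι | ¬ ∃ a ∈ M, b.repr a i ≠ 0}.Finite ∧
    ∀ hfin : {i : ι | ¬ ∃ a ∈ M, b.repr a i ≠ 0}.Finite,
      (∀ a : A,
        a - a * (∑ i ∈ hfin.toFinset, (b.repr (b i * b i) i)⁻¹ • b i) ∈ M) ∧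
      ∀ u : A, (∀ a : A, a - a * u ∈ M) ↔
        ∃ m ∈ M, u = m + ∑ i ∈ hfin.toFinset, (b.repr (b i * b i) i)⁻¹ • b i :=
  stmt9_general b hnat M hideal hmod
end

section
/- In the 2-dimensional evolution algebra A with natural basis {e_1, e_2}, e_1² = e_1 and e_2² = e_1 + e_2: the element e_1 lies in the Jacobson radical Rad(A) = K·e_1, yet e_1 is not quasi-invertible (there is no b ∈ A with e_1 + b - e_1 b = 0). -/
section Defs

variable {K : Type*} [Field K] {A : Type*} [NonUnitalNonAssocRing A]
  [Module K A] [SMulCommClass K A A] [IsScalarTower K A A]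

/-- A submodule is an ideal if it absorbs multiplication on both sides. -/
def IsIdeal (M : Submodule K A) : Prop :=
  ∀ x : A, ∀ a ∈ M, x * a ∈ M ∧ a * x ∈ M

/-- A modular ideal: an ideal admitting a modular unit `u` with `a - a * u ∈ M` for all `a`. -/
def IsModularIdeal (M : Submodule K A) : Prop :=
  IsIdeal M ∧ ∃ u : A, ∀ a : A, a - a * u ∈ M

/-- A maximal modular ideal: a proper modular ideal maximal among proper ideals. -/
def IsMaxModularIdeal (M : Submodule K A) : Prop :=
  IsModularIdeal M ∧ M ≠ ⊤ ∧ ∀ N : Submodule K A, IsIdeal N → M < N → N = ⊤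

/-- The Jacobson radical: the intersection of all maximal modular ideals. -/
def jacobsonRad (K A : Type*) [Field K] [NonUnitalNonAssocRing A]
    [Module K A] [SMulCommClass K A A] [IsScalarTower K A A] : Submodule K A :=
  sInf {M : Submodule K A | IsMaxModularIdeal M}

end Defs

/-!
Write `x = x₀ e₁ + x₁ e₂` with `e₁ = b 0`, `e₂ = b 1`. The product is
`xy = (x₀y₀ + x₁y₁) e₁ + x₁y₁ e₂`. An ideal containing an element `v` with `v₁ ≠ 0` contains
`v - e₁v = v₁ e₂`, hence `e₂` and `e₂² - e₂ = e₁`, so it is all of `A`. Thus every proper ideal lies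
in the line `K e₁`, which is itself an ideal, modular with unit `e₂`; it is therefore the only
maximal modular ideal and equals the radical. On the other hand the `e₁`-coordinate of
`e₁ + x - e₁x` is `1 + x₀ - x₀ = 1`, so `e₁` is not quasi-invertible.
-/

namespace Module.Basis

variable {K : Type*} [Field K] {A : Type*} [AddCommGroup A] [Module K A]

theorem eq_repr_zero_smul_add_repr_one_smul (b : Basis (Fin 2) K A) (a : A) :
    a = b.repr a 0 • b 0 + b.repr a 1 • b 1 := by
  rw [← Fin.sum_univ_two fun i ↦ b.repr a i • b i, b.sum_repr]

theorem mem_span_zero_iff_repr_one_eq_zero (b : Basis (Fin 2) K A) {v : A} :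
    v ∈ K ∙ b 0 ↔ b.repr v 1 = 0 := by
  rw [Submodule.mem_span_singleton]
  constructor
  · rintro ⟨c, rfl⟩
    simp
  · intro h
    exact ⟨b.repr v 0, by rw [b.eq_repr_zero_smul_add_repr_one_smul v, h]; simp⟩

theorem eq_top_of_mem_of_mem (b : Basis (Fin 2) K A) {N : Submodule K A}
    (h₀ : b 0 ∈ N) (h₁ : b 1 ∈ N) : N = ⊤ := by
  rw [eq_top_iff, ← b.span_eq, Submodule.span_le, Set.range_subset_iff]
  intro i
  fin_cases i
  exacts [h₀, h₁]

theorem span_zero_ne_top (b : Basis (Fin 2) K A) : (K ∙ b 0) ≠ ⊤ := fun h ↦ by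
  simpa using b.mem_span_zero_iff_repr_one_eq_zero.1 (h ▸ Submodule.mem_top : b 1 ∈ K ∙ b 0)

end Module.Basis

section EvolutionAlgebra

variable {K : Type*} [Field K] {A : Type*} [NonUnitalNonAssocRing A]
  [Module K A] [SMulCommClass K A A] [IsScalarTower K A A]

structure EvolutionTable (b : Module.Basis (Fin 2) K A) : Prop where
  mul_zero_one : b 0 * b 1 = 0
  mul_one_zero : b 1 * b 0 = 0
  mul_zero_zero : b 0 * b 0 = b 0
  mul_one_one : b 1 * b 1 = b 0 + b 1

namespace EvolutionTable

variable {b : Module.Basis (Fin 2) K A}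

theorem mul_eq (hb : EvolutionTable b) (x y : A) :
    x * y = (b.repr x 0 * b.repr y 0 + b.repr x 1 * b.repr y 1) • b 0
      + (b.repr x 1 * b.repr y 1) • b 1 := by
  conv_lhs => rw [b.eq_repr_zero_smul_add_repr_one_smul x, b.eq_repr_zero_smul_add_repr_one_smul y]
  simp only [add_mul, mul_add, smul_mul_assoc, mul_smul_comm, hb.mul_zero_zero, hb.mul_zero_one,
    hb.mul_one_zero, hb.mul_one_one, smul_zero, smul_add, smul_smul]
  module

theorem zero_mul_eq (hb : EvolutionTable b) (x : A) : b 0 * x = b.repr x 0 • b 0 := by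
  simp [hb.mul_eq]

theorem sub_zero_mul_eq (hb : EvolutionTable b) (x : A) : x - b 0 * x = b.repr x 1 • b 1 := by
  rw [hb.zero_mul_eq]
  nth_rw 1 [b.eq_repr_zero_smul_add_repr_one_smul x]
  abel

theorem mul_one_eq (hb : EvolutionTable b) (x : A) :
    x * b 1 = b.repr x 1 • b 0 + b.repr x 1 • b 1 := by
  simp [hb.mul_eq]

theorem isIdeal_span_zero (hb : EvolutionTable b) : IsIdeal (K ∙ b 0) := by
  intro x a ha
  simp only [b.mem_span_zero_iff_repr_one_eq_zero] at ha ⊢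
  simp [hb.mul_eq, ha]

theorem eq_top_of_isIdeal_of_repr_one_ne_zero (hb : EvolutionTable b) {N : Submodule K A}
    (hN : IsIdeal N) {v : A} (hv : v ∈ N) (hv₁ : b.repr v 1 ≠ 0) : N = ⊤ := by
  have hv₁N : b.repr v 1 • b 1 ∈ N := hb.sub_zero_mul_eq v ▸ N.sub_mem hv (hN (b 0) v hv).1
  have h₁ : b 1 ∈ N := by
    simpa [smul_smul, inv_mul_cancel₀ hv₁] using N.smul_mem (b.repr v 1)⁻¹ hv₁N
  have h₀ : b 0 ∈ N := by
    have h := N.sub_mem (hN (b 1) (b 1) h₁).1 h₁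
    rwa [hb.mul_one_one, add_sub_cancel_right] at h
  exact b.eq_top_of_mem_of_mem h₀ h₁

theorem le_span_zero_of_isIdeal (hb : EvolutionTable b) {N : Submodule K A} (hN : IsIdeal N)
    (hN_ne : N ≠ ⊤) : N ≤ K ∙ b 0 := by
  intro v hv
  rw [b.mem_span_zero_iff_repr_one_eq_zero]
  by_contra hv₁
  exact hN_ne (hb.eq_top_of_isIdeal_of_repr_one_ne_zero hN hv hv₁)

theorem isMaxModularIdeal_span_zero (hb : EvolutionTable b) : IsMaxModularIdeal (K ∙ b 0) := by
  refine ⟨⟨hb.isIdeal_span_zero, b 1, fun a ↦ ?_⟩, b.span_zero_ne_top, fun N hN hlt ↦ ?_⟩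
  · rw [b.mem_span_zero_iff_repr_one_eq_zero, hb.mul_one_eq]
    simp
  · by_contra hN_ne
    exact hlt.not_ge (hb.le_span_zero_of_isIdeal hN hN_ne)

theorem isMaxModularIdeal_iff (hb : EvolutionTable b) {M : Submodule K A} :
    IsMaxModularIdeal M ↔ M = K ∙ b 0 := by
  refine ⟨fun ⟨⟨hM, _⟩, hM_ne, hM_max⟩ ↦ ?_, fun h ↦ h ▸ hb.isMaxModularIdeal_span_zero⟩
  refine (hb.le_span_zero_of_isIdeal hM hM_ne).eq_of_not_lt fun hlt ↦ ?_
  exact b.span_zero_ne_top (hM_max _ hb.isIdeal_span_zero hlt)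

theorem jacobsonRad_eq (hb : EvolutionTable b) : jacobsonRad K A = K ∙ b 0 := by
  have h : {M : Submodule K A | IsMaxModularIdeal M} = {K ∙ b 0} :=
    Set.ext fun _ ↦ hb.isMaxModularIdeal_iff
  rw [jacobsonRad, h, sInf_singleton]

theorem repr_zero_add_sub_mul (hb : EvolutionTable b) (x : A) :
    b.repr (b 0 + x - b 0 * x) 0 = 1 := by
  simp [hb.zero_mul_eq]

end EvolutionTable

end EvolutionAlgebra

/-- In the 2-dimensional evolution algebra with natural basis `{e₁, e₂}`, `e₁² = e₁`,
`e₂² = e₁ + e₂`: the element `e₁` lies in the Jacobson radical `Rad(A) = K·e₁`, yet `e₁`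
is not quasi-invertible. -/
theorem stmt18 {K : Type*} [Field K] {A : Type*} [NonUnitalNonAssocRing A]
    [Module K A] [SMulCommClass K A A] [IsScalarTower K A A]
    (b : Module.Basis (Fin 2) K A)
    (h01 : b 0 * b 1 = 0) (h10 : b 1 * b 0 = 0)
    (h00 : b 0 * b 0 = b 0) (h11 : b 1 * b 1 = b 0 + b 1) :
    jacobsonRad K A = (K ∙ b 0) ∧
    b 0 ∈ jacobsonRad K A ∧
    ¬ ∃ x : A, b 0 + x - b 0 * x = 0 := by
  have hb : EvolutionTable b := ⟨h01, h10, h00, h11⟩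
  refine ⟨hb.jacobsonRad_eq, hb.jacobsonRad_eq ▸ Submodule.mem_span_singleton_self _, ?_⟩
  rintro ⟨x, hx⟩
  simpa [hx] using hb.repr_zero_add_sub_mul x
end
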